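/- arXiv:0912.4904 — 2 statements merged into one kernel-verified Lean document; each statement's English description precedes it below -/
import Mathlib

section
/- Siegel's linear independence criterion: Let θ₁,…,θ_m be real numbers. Assume that for every ε > 0 there exist m+1 linearly independent linear forms L_i(X₀,…,X_m) = Σ_{j=0}^m b_{ij} X_j (i = 0,…,m) with integer coefficients such that max_{0≤i≤m} |L_i(1,θ₁,…,θ_m)| ≤ ε / A^{m-1}, where A = max_{i,j} |b_{ij}|. Then the numbers 1, θ₁, …, θ_m are linearly independent over ℚ. -/
/-!
Suppose `a` is a nonzero integer vector with `a ⬝ᵥ (1, θ) = 0`, and let `b` be an integer matrix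
as in the hypothesis for a small `ε`. Exchanging a suitable row of `b` for `a` keeps the
determinant nonzero, so the new integer matrix `C` has `|det C| ≥ 1`. Replacing the first column
of `C` by `C (1, θ)` does not change the determinant; that column vanishes in the row of `a` and
is at most `ε / A ^ (m - 1)` elsewhere, while the other entries are at most `|a|₁` in the row of
`a` and at most `A` in the remaining `m` rows. So every entry is bounded by a row weight times a
column weight, and every term of the Leibniz expansion by their product, which gives
`|det C| ≤ (m + 1)! |a|₁ ε < 1` for small `ε`.
-/

open Matrix Finset
open scoped Nat

namespace Matrix

variable {n : Type*} [Fintype n] [DecidableEq n]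

theorem det_le_of_le_mul {R S : Type*} [CommRing R] [Nontrivial R]
    [CommRing S] [LinearOrder S] [IsStrictOrderedRing S]
    {A : Matrix n n R} {abv : AbsoluteValue R S} {r c : n → S}
    (h : ∀ i j, abv (A i j) ≤ r i * c j) :
    abv A.det ≤ (Fintype.card n)! • ((∏ i, r i) * ∏ j, c j) :=
  calc
    abv A.det = abv (∑ σ : Equiv.Perm n, Equiv.Perm.sign σ • ∏ i, A (σ i) i) :=
      congr_arg abv (det_apply _)
    _ ≤ ∑ σ : Equiv.Perm n, abv (Equiv.Perm.sign σ • ∏ i, A (σ i) i) := abv.sum_le _ _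
    _ = ∑ σ : Equiv.Perm n, ∏ i, abv (A (σ i) i) :=
      sum_congr rfl fun σ _ => by rw [abv.map_units_int_smul, abv.map_prod]
    _ ≤ ∑ σ : Equiv.Perm n, ∏ i, r (σ i) * c i :=
      sum_le_sum fun σ _ => prod_le_prod (fun i _ => abv.nonneg _) fun i _ => h _ _
    _ = (Fintype.card n)! • ((∏ i, r i) * ∏ j, c j) := by
      simp [prod_mul_distrib, Equiv.prod_comp, Fintype.card_perm]

theorem exists_det_updateRow_ne_zero {R : Type*} [CommRing R] [IsDomain R]
    {B : Matrix n n R} (hB : B.det ≠ 0) {a : n → R} (ha : a ≠ 0) :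
    ∃ i, (B.updateRow i a).det ≠ 0 := by
  by_contra! h
  have hcramer : cramer Bᵀ a = 0 := funext fun i => by
    rw [cramer_apply, updateCol_transpose, det_transpose, h, Pi.zero_apply]
  have := mulVec_cramer Bᵀ a
  rw [hcramer, mulVec_zero, det_transpose, eq_comm, smul_eq_zero] at this
  exact this.elim hB ha

theorem det_updateCol_mulVec {R : Type*} [CommRing R] (M : Matrix n n R) {x : n → R} {j : n}
    (hx : x j = 1) : (M.updateCol j (M *ᵥ x)).det = M.det := by
  have := det_updateCol_sum M j x
  simp only [smul_eq_mul, hx, one_mul, mul_comm (x _)] at this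
  exact this

theorem abs_det_updateRow_le {K : Type*} [Field K] [LinearOrder K] [IsStrictOrderedRing K]
    (B : Matrix n n K) (i : n) {a x : n → K} {i₀ : n} (hx : x i₀ = 1) (hax : a ⬝ᵥ x = 0)
    {α A δ : K} (hA : 1 ≤ A) (ha : ∀ j, |a j| ≤ α) (hB : ∀ k j, |B k j| ≤ A)
    (hBx : ∀ k, |(B *ᵥ x) k| ≤ δ) :
    |(B.updateRow i a).det| ≤ (Fintype.card n)! * (α * A ^ (Fintype.card n - 2) * δ) := by
  set C := B.updateRow i a
  have hA0 : 0 < A := zero_lt_one.trans_le hA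
  have hα : 0 ≤ α := (abs_nonneg _).trans (ha i)
  have hδ : 0 ≤ δ := (abs_nonneg _).trans (hBx i)
  set r := Function.update (fun _ => A) i α
  set c := Function.update (fun _ => (1 : K)) i₀ (δ / A)
  have hentry : ∀ k j, |(C.updateCol i₀ (C *ᵥ x)) k j| ≤ r k * c j := by
    intro k j
    rcases eq_or_ne k i with rfl | hk <;> rcases eq_or_ne j i₀ with rfl | hj
    · simp [C, r, c, mulVec, hax]
      positivity
    · simpa [C, r, c, hj] using ha j
    · simpa [C, r, c, hk, mul_div_cancel₀ _ hA0.ne', mulVec] using hBx k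
    · simpa [C, r, c, hk, hj] using hB k j
  have hprod_r : ∏ k, r k = α * A ^ (Fintype.card n - 1) := by
    rw [prod_update_of_mem (mem_univ i), prod_const, card_univ_sdiff, card_singleton]
  have hprod_c : ∏ j, c j = δ / A := by simp [c, prod_update_of_mem]
  have hpow : A ^ (Fintype.card n - 1) ≤ A ^ (Fintype.card n - 2) * A := by
    rw [← pow_succ]; exact pow_le_pow_right₀ hA (by omega)
  calc |C.det| = |(C.updateCol i₀ (C *ᵥ x)).det| := by rw [det_updateCol_mulVec C hx]
    _ ≤ (Fintype.card n)! • ((∏ k, r k) * ∏ j, c j) :=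
      det_le_of_le_mul (abv := AbsoluteValue.abs) hentry
    _ = (Fintype.card n)! * (α * A ^ (Fintype.card n - 1) / A * δ) := by
      rw [hprod_r, hprod_c, nsmul_eq_mul]; ring
    _ ≤ (Fintype.card n)! * (α * A ^ (Fintype.card n - 2) * δ) := by
      rw [mul_div_assoc]
      gcongr
      exact (div_le_iff₀ hA0).2 hpow

theorem one_le_sup'_abs_of_det_ne_zero [Nonempty n] {M : Matrix n n ℤ} (hM : M.det ≠ 0) :
    1 ≤ univ.sup' univ_nonempty fun p : n × n => |M p.1 p.2| := by
  obtain ⟨k, j, hkj⟩ : ∃ k j, M k j ≠ 0 := by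
    by_contra! h0
    exact hM (by simp [show M = 0 from funext₂ h0])
  exact (Int.one_le_abs hkj).trans (le_sup' (fun p : n × n => |M p.1 p.2|) (mem_univ (k, j)))

end Matrix

theorem exists_int_relation_of_not_linearIndependent {ι V : Type*} [Fintype ι] [AddCommGroup V]
    [Module ℚ V] {x : ι → V} (h : ¬LinearIndependent ℚ x) :
    ∃ a : ι → ℤ, a ≠ 0 ∧ ∑ j, a j • x j = 0 := by
  rw [← LinearIndependent.iff_fractionRing ℤ ℚ, Fintype.not_linearIndependent_iff] at h
  obtain ⟨a, hax, j, hj⟩ := h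
  exact ⟨a, fun h0 => hj (congrFun h0 j), hax⟩

theorem one_le_of_int_relation {n : Type*} [Fintype n] [DecidableEq n] {b : Matrix n n ℤ}
    (hb : b.det ≠ 0) {a : n → ℤ} (ha : a ≠ 0) {x : n → ℝ} {i₀ : n} (hx : x i₀ = 1)
    (hax : ∑ j, a j • x j = 0) {A δ : ℝ} (hA : 1 ≤ A) (hbA : ∀ k j, |(b k j : ℝ)| ≤ A)
    (hbx : ∀ k, |∑ j, (b k j : ℝ) * x j| ≤ δ) :
    1 ≤ (Fintype.card n)! * ((∑ j, |(a j : ℝ)|) * A ^ (Fintype.card n - 2) * δ) := by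
  obtain ⟨i, hi⟩ := exists_det_updateRow_ne_zero hb ha
  calc (1 : ℝ) ≤ |((b.updateRow i a).det : ℝ)| := by exact_mod_cast Int.one_le_abs hi
    _ = |((b.map ((↑) : ℤ → ℝ)).updateRow i ((↑) ∘ a)).det| := by
      rw [← map_updateRow, ← Int.cast_det]
    _ ≤ _ := abs_det_updateRow_le _ i hx (by simpa [dotProduct, zsmul_eq_mul] using hax) hA
      (fun j => single_le_sum (f := fun j => |(a j : ℝ)|) (fun _ _ => abs_nonneg _) (mem_univ j))
      hbA hbx

theorem siegel_linear_independence_criterion (m : ℕ) (θ : Fin m → ℝ)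
    (h : ∀ ε : ℝ, 0 < ε → ∃ b : Fin (m + 1) → Fin (m + 1) → ℤ,
      (Matrix.det (fun i j => (b i j : ℚ)) ≠ 0) ∧
      ∀ i : Fin (m + 1),
        |∑ j, (b i j : ℝ) * (Fin.cons 1 θ : Fin (m + 1) → ℝ) j| ≤
          ε / ((Finset.univ.sup' Finset.univ_nonempty fun p : Fin (m + 1) × Fin (m + 1) => |b p.1 p.2| : ℤ) : ℝ) ^ (m - 1)) :
    LinearIndependent ℚ (Fin.cons 1 θ : Fin (m + 1) → ℝ) := by
  by_contra hx
  obtain ⟨a, ha0, hax⟩ := exists_int_relation_of_not_linearIndependent hx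
  set α : ℝ := ∑ j, |(a j : ℝ)|
  set ε : ℝ := 1 / ((m + 1)! * (α + 1))
  obtain ⟨b, hdet, hbound⟩ := h ε (by positivity)
  set A : ℤ := univ.sup' univ_nonempty fun p : Fin (m + 1) × Fin (m + 1) => |b p.1 p.2|
  have hdet' : (Matrix.of b).det ≠ 0 := by
    rwa [← Int.cast_ne_zero (α := ℚ), Int.cast_det]
  have hA : (1 : ℝ) ≤ A := by exact_mod_cast one_le_sup'_abs_of_det_ne_zero hdet'
  have hbA (k j : Fin (m + 1)) : |(b k j : ℝ)| ≤ A := by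
    exact_mod_cast le_sup' (fun p : Fin (m + 1) × Fin (m + 1) => |b p.1 p.2|) (mem_univ (k, j))
  have key := one_le_of_int_relation hdet' ha0 (Fin.cons_zero 1 θ) hax hA hbA hbound
  rw [Fintype.card_fin, show m + 1 - 2 = m - 1 by omega] at key
  have hApow : (A : ℝ) ^ (m - 1) ≠ 0 := by positivity
  refine lt_irrefl (1 : ℝ) ?_
  calc 1 ≤ (m + 1)! * (α * (A : ℝ) ^ (m - 1) * (ε / (A : ℝ) ^ (m - 1))) := key
    _ = α / (α + 1) := by simp only [ε]; field_simp
    _ < 1 := (div_lt_one (by positivity)).2 (lt_add_one α)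
end

section
/- Dimension count via multiplication by a fixed polynomial: Let Q ∈ ℚ[X₁,…,X_t] be a nonzero polynomial of total degree ≤ δ vanishing at a point (θ₁,…,θ_t) ∈ ℝ^t. Then the ℚ-vector space spanned by the real numbers {θ₁^{i₁}⋯θ_t^{i_t} : i₁+⋯+i_t ≤ d}, for any integer d ≥ δ, has dimension at most C(t+d, t) − C(t+d−δ, t). -/
/-!
Let `W_n` be the space of rational polynomials of total degree `≤ n`; it has dimension
`C(t+n, t)`, the number of exponents of degree `≤ n` in `t` variables, which after adding a slack
variable are the exponents of degree exactly `n` in `t + 1` variables (stars and bars).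
The span in question lies in the image of `W_d` under evaluation at `θ`, so by rank-nullity its
dimension is at most `C(t+d, t)` minus the dimension of the kernel on `W_d`. That kernel contains
`Q • W_{d-δ}`, which has dimension `C(t+d-δ, t)` because multiplication by `Q ≠ 0` is injective.
-/

open MvPolynomial Module

namespace Finsupp

variable {σ : Type*}

lemma sum_option_eq_add (g : Option σ →₀ ℕ) :
    (g.sum fun _ e => e) = g none + g.some.sum fun _ e => e :=
  g.sum_option_index _ (fun _ => rfl) fun _ _ _ => rfl

-- The exponent of `none` records the slack `n - deg f`.
noncomputable def sumLeEquivOptionSumEq (σ : Type*) (n : ℕ) :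
    {f : σ →₀ ℕ // (f.sum fun _ e => e) ≤ n} ≃
      {g : Option σ →₀ ℕ // (g.sum fun _ e => e) = n} where
  toFun f := ⟨f.1.optionElim (n - f.1.sum fun _ e => e), by
    rw [sum_option_eq_add, some_optionElim, optionElim_apply_none]
    exact Nat.sub_add_cancel f.2⟩
  invFun g := ⟨g.1.some, by have := sum_option_eq_add g.1; have := g.2; omega⟩
  left_inv f := Subtype.ext (some_optionElim _ _)
  right_inv g := Subtype.ext <| by
    have hslack : n - (g.1.some.sum fun _ e => e) = g.1 none := by
      have := sum_option_eq_add g.1; have := g.2; omega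
    simp only [hslack, optionElim_some]

theorem card_sum_le_eq_choose [Fintype σ] (n : ℕ) :
    Nat.card {f : σ →₀ ℕ // (f.sum fun _ e => e) ≤ n} =
      (Fintype.card σ + n).choose (Fintype.card σ) := by
  classical
  rw [Nat.card_congr ((sumLeEquivOptionSumEq σ n).trans (Sym.equivNatSum (Option σ) n).symm),
    Nat.card_eq_fintype_card, Sym.card_sym_eq_choose, Fintype.card_option,
    Nat.add_right_comm, Nat.add_sub_cancel, Nat.choose_symm_add]

end Finsupp

theorem Submodule.finrank_map_add_finrank_le {K V W : Type*} [DivisionRing K] [AddCommGroup V]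
    [Module K V] [AddCommGroup W] [Module K W] (f : V →ₗ[K] W) {N U : Submodule K V}
    [FiniteDimensional K N] (hUN : U ≤ N) (hUf : U ≤ LinearMap.ker f) :
    finrank K (N.map f) + finrank K U ≤ finrank K N := by
  have rank_nullity := LinearMap.finrank_range_add_finrank_ker (f.domRestrict N)
  rw [LinearMap.range_domRestrict, LinearMap.ker_domRestrict] at rank_nullity
  have hU : finrank K U ≤ finrank K ((LinearMap.ker f).comap N.subtype) := by
    rw [← (Submodule.comapSubtypeEquivOfLe hUN).finrank_eq]
    exact Submodule.finrank_mono (Submodule.comap_mono hUf)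
  omega

namespace MvPolynomial

variable {σ R A : Type*}

theorem finrank_restrictTotalDegree [Fintype σ] [CommRing R] [StrongRankCondition R] (d : ℕ) :
    finrank R (restrictTotalDegree σ R d) = (Fintype.card σ + d).choose (Fintype.card σ) := by
  rw [restrictTotalDegree, finrank_eq_nat_card_basis (basisRestrictSupport R _)]
  exact Finsupp.card_sum_le_eq_choose d

variable [CommSemiring R]

theorem prod_pow_mem_map_restrictTotalDegree [Fintype σ] [CommSemiring A] [Algebra R A]
    (θ : σ → A) {d : ℕ} {i : σ → ℕ} (hi : ∑ j, i j ≤ d) :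
    ∏ j, θ j ^ i j ∈ (restrictTotalDegree σ R d).map (aeval θ).toLinearMap := by
  refine ⟨monomial (Finsupp.equivFunOnFinite.symm i) 1, ?_, ?_⟩
  · rw [SetLike.mem_coe, mem_restrictTotalDegree]
    refine (totalDegree_monomial_le _ _).trans ?_
    simpa [Finsupp.sum_fintype] using hi
  · simp [aeval_monomial, Finsupp.prod_fintype]

theorem map_mulLeft_restrictTotalDegree_le {Q : MvPolynomial σ R} {δ : ℕ}
    (hQ : Q.totalDegree ≤ δ) (n : ℕ) :
    (restrictTotalDegree σ R n).map (LinearMap.mulLeft R Q) ≤ restrictTotalDegree σ R (δ + n) := by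
  rintro _ ⟨p, hp, rfl⟩
  rw [SetLike.mem_coe, mem_restrictTotalDegree] at hp
  rw [LinearMap.mulLeft_apply, mem_restrictTotalDegree]
  exact (totalDegree_mul Q p).trans (add_le_add hQ hp)

theorem range_mulLeft_le_ker_aeval [CommSemiring A] [Algebra R A] {θ : σ → A}
    {Q : MvPolynomial σ R} (hQθ : aeval θ Q = 0) :
    LinearMap.range (LinearMap.mulLeft R Q) ≤ LinearMap.ker (aeval θ).toLinearMap := by
  rintro _ ⟨p, rfl⟩
  simp [hQθ]

end MvPolynomial

theorem dimension_count_via_multiplication (t : ℕ) (θ : Fin t → ℝ)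
    (δ d : ℕ) (hdδ : δ ≤ d)
    (Q : MvPolynomial (Fin t) ℚ) (hQ : Q ≠ 0) (hQdeg : Q.totalDegree ≤ δ)
    (hQθ : MvPolynomial.aeval θ Q = 0) :
    Module.finrank ℚ (Submodule.span ℚ
        {x : ℝ | ∃ i : Fin t → ℕ, (∑ j, i j ≤ d) ∧ x = ∏ j, θ j ^ i j}) ≤
      (t + d).choose t - (t + d - δ).choose t := by
  set ev := (aeval θ : MvPolynomial (Fin t) ℚ →ₐ[ℚ] ℝ).toLinearMap
  set U := (restrictTotalDegree (Fin t) ℚ (d - δ)).map (LinearMap.mulLeft ℚ Q)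
  have hspan : Submodule.span ℚ {x : ℝ | ∃ i : Fin t → ℕ, (∑ j, i j ≤ d) ∧ x = ∏ j, θ j ^ i j} ≤
      (restrictTotalDegree (Fin t) ℚ d).map ev := by
    rw [Submodule.span_le]
    rintro _ ⟨i, hi, rfl⟩
    exact prod_pow_mem_map_restrictTotalDegree θ hi
  have hUdeg : U ≤ restrictTotalDegree (Fin t) ℚ d := by
    simpa [Nat.add_sub_cancel' hdδ] using map_mulLeft_restrictTotalDegree_le hQdeg (d - δ)
  have hUker : U ≤ LinearMap.ker ev := LinearMap.map_le_range.trans (range_mulLeft_le_ker_aeval hQθ)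
  have hUrank : finrank ℚ U = (t + d - δ).choose t := by
    rw [← (Submodule.equivMapOfInjective _ (mul_right_injective₀ hQ) _).finrank_eq,
      finrank_restrictTotalDegree, Fintype.card_fin, Nat.add_sub_assoc hdδ]
  have hcount := Submodule.finrank_map_add_finrank_le ev hUdeg hUker
  rw [hUrank, finrank_restrictTotalDegree, Fintype.card_fin] at hcount
  exact (Submodule.finrank_mono hspan).trans (Nat.le_sub_of_add_le hcount)
end
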